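/- arXiv:2005.02511 — 6 statements merged into one kernel-verified Lean document; each statement's English description precedes it below -/
import Mathlib

section
/- Let v ∈ ℝ^m be a nonzero vector with nonnegative entries. Then the vector u = v + (‖v‖₂/√m)·1_m has strictly positive entries and is an eigenvector of H(v) with eigenvalue λ₊(v) = (‖v‖₁ + √m·‖v‖₂)/2; moreover λ₊(v) is a simple eigenvalue of H(v) (it has multiplicity one), so every eigenvector of H(v) for the eigenvalue λ₊(v) is a scalar multiple of u. -/
open Matrix BigOperators

noncomputable section

/-- The ℓ¹ norm of a vector in `ℝ^m`. -/
def l1 {m : ℕ} (x : Fin m → ℝ) : ℝ := ∑ i, |x i|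

/-- The ℓ² norm of a vector in `ℝ^m`. -/
def l2 {m : ℕ} (x : Fin m → ℝ) : ℝ := Real.sqrt (∑ i, x i ^ 2)

/-- `H(x) = (x 1_mᵀ + 1_m xᵀ)/2`, i.e. `H(x) i j = (x i + x j)/2`. -/
def Hmat {m : ℕ} (x : Fin m → ℝ) : Matrix (Fin m) (Fin m) ℝ :=
  Matrix.of fun i j => (x i + x j) / 2

/-- `λ₊(v) = (‖v‖₁ + √m‖v‖₂)/2`, the largest eigenvalue of `H(v)`. -/
def lamPlus {m : ℕ} (v : Fin m → ℝ) : ℝ := (l1 v + Real.sqrt m * l2 v) / 2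

/-- Let `v ∈ ℝ^m` be a nonzero vector with nonnegative entries.  Then the
vector `u = v + (‖v‖₂/√m) 1_m` has strictly positive entries and is an eigenvector of `H(v)`
with eigenvalue `λ₊(v) = (‖v‖₁ + √m‖v‖₂)/2`; moreover `λ₊(v)` is a simple eigenvalue of
`H(v)`, so every eigenvector of `H(v)` for the eigenvalue `λ₊(v)` is a scalar multiple
of `u`. -/
theorem statement1 (m : ℕ) (v : Fin m → ℝ)
    (hv_nonneg : ∀ i, 0 ≤ v i) (hv_ne : v ≠ 0) :
    let u : Fin m → ℝ := fun g => v g + l2 v / Real.sqrt m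
    (∀ g, 0 < u g) ∧
    (Hmat v).mulVec u = lamPlus v • u ∧
    (∀ w : Fin m → ℝ, (Hmat v).mulVec w = lamPlus v • w → ∃ c : ℝ, w = c • u) := by
  intro u
  obtain ⟨i₀, hi₀⟩ : ∃ i, v i ≠ 0 := by
    by_contra h; push_neg at h; exact hv_ne (funext h)
  have hmR : (0:ℝ) < (m:ℝ) := by exact_mod_cast Fin.pos i₀
  have hsm : (0:ℝ) < Real.sqrt m := Real.sqrt_pos.2 hmR
  have hsq : Real.sqrt m * Real.sqrt m = (m:ℝ) := Real.mul_self_sqrt hmR.le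
  set N := l2 v with hN
  have hsum2 : (0:ℝ) < ∑ i, v i ^ 2 :=
    Finset.sum_pos' (fun j _ => sq_nonneg _) ⟨i₀, Finset.mem_univ i₀, by positivity⟩
  have hNpos : 0 < N := Real.sqrt_pos.2 hsum2
  have hN2 : N * N = ∑ i, v i ^ 2 := Real.mul_self_sqrt hsum2.le
  set S := ∑ i, v i with hS
  have hl1 : l1 v = S := Finset.sum_congr rfl fun i _ => abs_of_nonneg (hv_nonneg i)
  have hSnn : 0 ≤ S := Finset.sum_nonneg fun i _ => hv_nonneg i
  have hlam : lamPlus v = (S + Real.sqrt m * N) / 2 := by rw [lamPlus, hl1]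
  have hlampos : 0 < lamPlus v := by rw [hlam]; positivity
  have key : ∀ (w : Fin m → ℝ) i,
      (Hmat v).mulVec w i = v i * ((∑ j, w j) / 2) + (∑ j, v j * w j) / 2 := by
    intro w i
    simp only [Hmat, mulVec, dotProduct, of_apply]
    calc ∑ x, (v i + v x) / 2 * w x
        = ∑ x, (v i * w x / 2 + v x * w x / 2) :=
          Finset.sum_congr rfl fun j _ => by ring
      _ = v i * ((∑ j, w j) / 2) + (∑ j, v j * w j) / 2 := by
          rw [Finset.sum_add_distrib, ← Finset.sum_div, ← Finset.sum_div,
            ← Finset.mul_sum, mul_div_assoc]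
  have hmN : (m:ℝ) * (N / Real.sqrt m) = Real.sqrt m * N := by
    field_simp
    linear_combination (-1:ℝ) * hsq
  have husum : ∑ j, u j = S + Real.sqrt m * N := by
    simp only [u, Finset.sum_add_distrib, Finset.sum_const, Finset.card_univ,
      Fintype.card_fin, nsmul_eq_mul, ← hS, ← hN, hmN]
  have hvusum : ∑ j, v j * u j = N * N + S * N / Real.sqrt m := by
    have h : ∀ j, v j * u j = v j ^ 2 + v j * (N / Real.sqrt m) := fun j => by
      simp only [u, ← hN]; ring
    rw [Finset.sum_congr rfl fun j _ => h j, Finset.sum_add_distrib, ← hN2,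
      ← Finset.sum_mul, ← hS]
    ring
  refine ⟨?_, ?_, ?_⟩
  · intro g
    have h1 : 0 < N / Real.sqrt m := div_pos hNpos hsm
    have h2 := hv_nonneg g
    simp only [u, ← hN]; linarith
  · funext i
    rw [key, husum, hvusum, Pi.smul_apply, hlam, smul_eq_mul]
    show v i * ((S + Real.sqrt m * N) / 2) + (N * N + S * N / Real.sqrt m) / 2
      = (S + Real.sqrt m * N) / 2 * (v i + N / Real.sqrt m)
    field_simp
    ring_nf
  · intro w hw
    set A : ℝ := (∑ j, w j) / 2 with hA
    set B : ℝ := (∑ j, v j * w j) / 2 with hB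
    have heig : ∀ i, lamPlus v * w i = v i * A + B := by
      intro i
      have h := congrFun hw i
      rw [key] at h
      simp only [Pi.smul_apply, smul_eq_mul] at h
      rw [← h]
    have hsumw : lamPlus v * ∑ j, w j = S * A + m * B := by
      have h : ∑ i, lamPlus v * w i = ∑ i, (v i * A + B) :=
        Finset.sum_congr rfl fun i _ => heig i
      rw [← Finset.mul_sum, Finset.sum_add_distrib, ← Finset.sum_mul,
        Finset.sum_const, Finset.card_univ, Fintype.card_fin, nsmul_eq_mul, ← hS] at h
      exact h
    have h2A : (∑ j, w j) = 2 * A := by rw [hA]; ring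
    rw [h2A, hlam] at hsumw
    have hrel : Real.sqrt m * N * A = m * B := by linear_combination hsumw
    have hBA : Real.sqrt m * B = A * N :=
      mul_left_cancel₀ (ne_of_gt hsm)
        (show Real.sqrt m * (Real.sqrt m * B) = Real.sqrt m * (A * N) by
          linear_combination B * hsq - hrel)
    refine ⟨A / lamPlus v, funext fun i => ?_⟩
    have hAB : A * (N / Real.sqrt m) = B := by
      rw [mul_div_assoc', ← hBA, mul_div_cancel_left₀ _ (ne_of_gt hsm)]
    have h1 : lamPlus v * w i = lamPlus v * ((A / lamPlus v) • u) i := by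
      rw [heig i]
      simp only [Pi.smul_apply, smul_eq_mul, u, ← hN]
      rw [← hAB]
      field_simp [ne_of_gt hsm, ne_of_gt hlampos]
    exact mul_left_cancel₀ (ne_of_gt hlampos) h1

end
end

section
/- Let v ∈ ℝ^m be a nonzero vector with nonnegative entries. Then H(v)·α(v) = λ₊(v)·α(v), and the matrix α(v)·α(v)^T − H(v) is positive semidefinite of rank at most one; in particular H(v) − α(v)α(v)^T is negative semidefinite. -/
open Matrix BigOperators

noncomputable section

lemma vecMulVec_self_posSemidef {m : ℕ} (w : Fin m → ℝ) :
    (Matrix.vecMulVec w w).PosSemidef := by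
  have h : Matrix.vecMulVec w w = (Matrix.replicateRow Unit w)ᴴ * Matrix.replicateRow Unit w := by
    rw [Matrix.conjTranspose_replicateRow, star_trivial, ← Matrix.vecMulVec_eq]
  rw [h]
  exact Matrix.posSemidef_conjTranspose_mul_self _

lemma vecMulVec_rank_le_one {m : ℕ} (w x : Fin m → ℝ) :
    (Matrix.vecMulVec w x).rank ≤ 1 := by
  rw [Matrix.vecMulVec_eq Unit]
  calc (Matrix.replicateCol Unit w * Matrix.replicateRow Unit x).rank ≤ (Matrix.replicateCol Unit w).rank :=
        Matrix.rank_mul_le_left _ _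
    _ ≤ Fintype.card Unit := Matrix.rank_le_card_width _
    _ = 1 := rfl

/-- Let `v ∈ ℝ^m` be a nonzero vector with nonnegative entries, let `u` be
the (unique) unit-norm eigenvector of `H(v)` for the eigenvalue `λ₊(v)` with strictly positive
entries, and set `α(v) = √(λ₊(v)) • u`.  Then `H(v) α(v) = λ₊(v) α(v)`, and
`α(v) α(v)ᵀ − H(v)` is positive semidefinite of rank at most one; in particular
`H(v) − α(v) α(v)ᵀ` is negative semidefinite. -/
theorem statement2 (m : ℕ) (v : Fin m → ℝ)
    (hv_nonneg : ∀ i, 0 ≤ v i) (hv_ne : v ≠ 0)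
    (u : Fin m → ℝ)
    (hu_unit : l2 u = 1) (hu_pos : ∀ g, 0 < u g)
    (hu_eig : (Hmat v).mulVec u = lamPlus v • u)
    (α : Fin m → ℝ) (hα : α = Real.sqrt (lamPlus v) • u) :
    (Hmat v).mulVec α = lamPlus v • α ∧
    (Matrix.vecMulVec α α - Hmat v).PosSemidef ∧
    (Matrix.vecMulVec α α - Hmat v).rank ≤ 1 ∧
    (-(Hmat v - Matrix.vecMulVec α α)).PosSemidef := by
  set L := lamPlus v with hLdef
  -- L > 0
  have hl2 : 0 ≤ l2 v := Real.sqrt_nonneg _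
  have hl1 : 0 < l1 v := by
    obtain ⟨i, hi⟩ : ∃ i, v i ≠ 0 := by
      by_contra h; push_neg at h; exact hv_ne (funext h)
    have habs : 0 < |v i| := abs_pos.mpr hi
    calc (0:ℝ) < |v i| := habs
      _ ≤ ∑ j, |v j| :=
        Finset.single_le_sum (f := fun j => |v j|) (fun j _ => abs_nonneg _) (Finset.mem_univ i)
  have hL : 0 < L := by
    have hmn : 0 ≤ Real.sqrt m * l2 v := mul_nonneg (Real.sqrt_nonneg _) hl2
    have : L = (l1 v + Real.sqrt m * l2 v) / 2 := rfl
    rw [this]; linarith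
  have hLne : L ≠ 0 := ne_of_gt hL
  -- norm of u
  have hnorm : ∑ i, u i ^ 2 = 1 := by
    have h1 : Real.sqrt (∑ i, u i ^ 2) = 1 := hu_unit
    have h2 : 0 ≤ ∑ i, u i ^ 2 := Finset.sum_nonneg fun i _ => sq_nonneg _
    nlinarith [Real.sq_sqrt h2, h1]
  set s := ∑ i, u i with hs
  set t := ∑ i, v i * u i with ht
  -- eigen equation pointwise
  have hu_eq : ∀ i, 2 * L * u i = v i * s + t := by
    intro i
    have hpt := congrFun hu_eig i
    simp only [Matrix.mulVec, dotProduct, Hmat, Matrix.of_apply, Pi.smul_apply,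
      smul_eq_mul] at hpt
    have hsum : ∑ j, (v i + v j) / 2 * u j = (v i * s + t) / 2 := by
      rw [hs, ht, Finset.mul_sum, ← Finset.sum_add_distrib, Finset.sum_div]
      apply Finset.sum_congr rfl; intro j _; ring
    rw [hsum] at hpt
    linarith
  -- s * t = L
  have hst : s * t = L := by
    have h1 : ∑ i, u i * (2 * L * u i) = ∑ i, u i * (v i * s + t) := by
      apply Finset.sum_congr rfl; intro i _; rw [hu_eq i]
    have h2 : ∑ i, u i * (2 * L * u i) = 2 * L := by
      have he : ∑ i, u i * (2 * L * u i) = 2 * L * ∑ i, u i ^ 2 := by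
        rw [Finset.mul_sum]; apply Finset.sum_congr rfl; intro i _; ring
      rw [he, hnorm, mul_one]
    have h3 : ∑ i, u i * (v i * s + t) = 2 * (s * t) := by
      have he : ∀ i, u i * (v i * s + t) = (v i * u i) * s + u i * t := fun i => by ring
      simp_rw [he]
      rw [Finset.sum_add_distrib, ← Finset.sum_mul, ← Finset.sum_mul, ← ht, ← hs]; ring
    rw [h2, h3] at h1; linarith
  -- explicit formula for u
  have hu_form : ∀ i, u i = (v i * s + t) / (2 * L) := by
    intro i
    field_simp
    linarith [hu_eq i]
  -- sqrt L squared
  have hsq : Real.sqrt L * Real.sqrt L = L := Real.mul_self_sqrt hL.le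
  -- the key matrix identity
  set w : Fin m → ℝ := fun i => (s * v i - t) / (2 * Real.sqrt L) with hw
  have hkey : Matrix.vecMulVec α α - Hmat v = Matrix.vecMulVec w w := by
    ext i j
    simp only [Matrix.sub_apply, Matrix.vecMulVec_apply, Hmat, Matrix.of_apply]
    have h4 : (2 * Real.sqrt L) * (2 * Real.sqrt L) = 4 * L := by nlinarith [hsq]
    have hwij : w i * w j = ((s * v i - t) * (s * v j - t)) / (4 * L) := by
      rw [hw]; simp only
      rw [div_mul_div_comm, h4]
    have hαij : α i * α j = L * (u i * u j) := by
      rw [hα]; simp only [Pi.smul_apply, smul_eq_mul]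
      calc Real.sqrt L * u i * (Real.sqrt L * u j)
          = (Real.sqrt L * Real.sqrt L) * (u i * u j) := by ring
        _ = L * (u i * u j) := by rw [hsq]
    have hnum : (v i * s + t) * (v j * s + t) - 2 * L * (v i + v j)
        = (s * v i - t) * (s * v j - t) := by
      linear_combination (2 * (v i + v j)) * hst
    rw [hαij, hwij, hu_form i, hu_form j]
    field_simp
    linear_combination (8 * (v i + v j)) * hst
  -- first conjunct
  have h1 : (Hmat v).mulVec α = L • α := by
    rw [hα, Matrix.mulVec_smul, hu_eig, smul_comm]
  have hpsd : (Matrix.vecMulVec α α - Hmat v).PosSemidef := by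
    rw [hkey]; exact vecMulVec_self_posSemidef w
  refine ⟨h1, hpsd, ?_, ?_⟩
  · rw [hkey]; exact vecMulVec_rank_le_one w w
  · rw [neg_sub]; exact hpsd
end
end

section
/- Let X ∈ ℝ^{n×d}, let C^(1),…,C^(m) be d×d diagonal matrices with nonnegative entries such that min_{i∈[d]} max_{g∈[m]} C^(g)_{ii} > 0, and let P̃ ∈ ℝ^{nm×nm} be the m×m block matrix whose (g,k) block is X((C^(g)+C^(k))/2)X^T. Then: (i) P̃ has at most d strictly positive eigenvalues and at most d strictly negative eigenvalues (counted with multiplicity), so rank(P̃) ≤ 2d; (ii) if rank(X) = d then rank(P̃) ≥ d; (iii) if in addition the columns of X are nonzero and pairwise orthogonal, then P̃ has exactly d strictly positive eigenvalues. -/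
open Matrix BigOperators

noncomputable section

private lemma dim_aux {μ κ ι' : Type*} [Fintype μ] [Fintype κ] [Fintype ι']
    (u : ι' → (μ → ℝ)) (f : (μ → ℝ) →ₗ[ℝ] (κ → ℝ)) (q : (μ → ℝ) → Prop)
    (h1 : ∀ c : ι' → ℝ, c ≠ 0 → q (∑ l, c l • u l))
    (h2 : ∀ x, f x = 0 → ¬ q x) :
    Fintype.card ι' ≤ Fintype.card κ := by
  let T : (ι' → ℝ) →ₗ[ℝ] (μ → ℝ) :=
    { toFun := fun c => ∑ l, c l • u l
      map_add' := by intro a b; simp [add_smul, Finset.sum_add_distrib]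
      map_smul' := by intro r a; simp [smul_smul, Finset.smul_sum]  }
  have hinj : Function.Injective (f ∘ₗ T) := by
    rw [← LinearMap.ker_eq_bot, LinearMap.ker_eq_bot']
    intro c hc
    by_contra hc0
    exact h2 _ hc (h1 c hc0)
  calc Fintype.card ι' = Module.finrank ℝ (ι' → ℝ) :=
        (Module.finrank_fintype_fun_eq_card ℝ).symm
    _ ≤ Module.finrank ℝ (κ → ℝ) := LinearMap.finrank_le_finrank_of_injective hinj
    _ = Fintype.card κ := Module.finrank_fintype_fun_eq_card ℝ

private lemma form_eq {ι : Type*} [Fintype ι] [DecidableEq ι]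
    {A : Matrix ι ι ℝ} (hA : A.IsHermitian) (x : ι → ℝ) :
    x ⬝ᵥ A *ᵥ x = ∑ h, hA.eigenvalues h * ((fun i => hA.eigenvectorBasis h i) ⬝ᵥ x)^2 := by
  have hsp : A = (hA.eigenvectorUnitary : Matrix ι ι ℝ) * diagonal hA.eigenvalues
      * (hA.eigenvectorUnitary : Matrix ι ι ℝ)ᵀ := by
    have := hA.spectral_theorem
    simp [Matrix.star_eq_conjTranspose, Matrix.conjTranspose] at this
    refine this.trans ?_; congr 1
  set U : Matrix ι ι ℝ := (hA.eigenvectorUnitary : Matrix ι ι ℝ) with hU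
  have hy : ∀ h, (Uᵀ *ᵥ x) h = (fun i => hA.eigenvectorBasis h i) ⬝ᵥ x := by
    intro h
    simp [mulVec, dotProduct, hU, transpose_apply]
  conv_lhs => rw [hsp]
  rw [← Matrix.mulVec_mulVec, ← Matrix.mulVec_mulVec, Matrix.dotProduct_mulVec x U,
    ← Matrix.mulVec_transpose]
  simp only [dotProduct, Matrix.mulVec_diagonal, hy]
  exact Finset.sum_congr rfl fun h _ => by ring

private lemma eigvec_dot {ι : Type*} [Fintype ι] [DecidableEq ι]
    {A : Matrix ι ι ℝ} (hA : A.IsHermitian) (h h' : ι) :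
    (fun i => hA.eigenvectorBasis h i) ⬝ᵥ (fun i => hA.eigenvectorBasis h' i)
      = if h = h' then 1 else 0 := by
  have := orthonormal_iff_ite.mp hA.eigenvectorBasis.orthonormal h h'
  simpa [PiLp.inner_apply, RCLike.inner_apply, dotProduct, mul_comm] using this


/-- Let `X ∈ ℝ^{n×d}`, let `C^(1), …, C^(m)` be `d×d` diagonal matrices
with nonnegative entries such that `min_i max_g C^(g)_{ii} > 0`, and let `P̃` be the `nm×nm`
block matrix whose `(g,k)` block is `X ((C^(g)+C^(k))/2) Xᵀ`.  Then:
(i) `P̃` has at most `d` strictly positive and at most `d` strictly negative eigenvalues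
(counted with multiplicity), so `rank P̃ ≤ 2d`;
(ii) if `rank X = d` then `rank P̃ ≥ d`;
(iii) if in addition the columns of `X` are nonzero and pairwise orthogonal, then `P̃` has
exactly `d` strictly positive eigenvalues. -/
theorem statement3 (n d m : ℕ) (hd : 0 < d) (hm : 0 < m)
    (X : Matrix (Fin n) (Fin d) ℝ)
    (C : Fin m → Matrix (Fin d) (Fin d) ℝ)
    (hCdiag : ∀ g, (C g).IsDiag) (hCnn : ∀ g i, 0 ≤ C g i i)
    (hCpos : ∀ i, ∃ g, 0 < C g i i)
    (Ptil : Matrix (Fin m × Fin n) (Fin m × Fin n) ℝ)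
    (hPtil : ∀ p q, Ptil p q = (X * ((2:ℝ)⁻¹ • (C p.1 + C q.1)) * Xᵀ) p.2 q.2)
    (hHerm : Ptil.IsHermitian) :
    ((Finset.univ.filter fun h => 0 < hHerm.eigenvalues h).card ≤ d ∧
      (Finset.univ.filter fun h => hHerm.eigenvalues h < 0).card ≤ d ∧
      Ptil.rank ≤ 2 * d) ∧
    (X.rank = d → d ≤ Ptil.rank) ∧
    ((∀ j, (fun i => X i j) ≠ 0) →
      (∀ j k, j ≠ k → (fun i => X i j) ⬝ᵥ (fun i => X i k) = 0) →
      (Finset.univ.filter fun h => 0 < hHerm.eigenvalues h).card = d) := by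
  classical
  have hent : ∀ p q, Ptil p q
      = ∑ l, X p.2 l * X q.2 l * ((2:ℝ)⁻¹ * (C p.1 l l + C q.1 l l)) := by
    intro p q
    rw [hPtil]
    have hdiag : ∀ p q : Fin m × Fin n, ((2:ℝ)⁻¹ • (C p.1 + C q.1))
        = diagonal (fun l => (2:ℝ)⁻¹ * (C p.1 l l + C q.1 l l)) := by
      intro p q
      ext a b
      rcases eq_or_ne a b with rfl | hab
      · simp
      · simp [diagonal_apply_ne _ hab, (hCdiag p.1) hab, (hCdiag q.1) hab]
    rw [hdiag]
    simp only [Matrix.mul_apply, Matrix.transpose_apply, Matrix.diagonal_apply,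
      mul_ite, mul_zero, ite_mul, zero_mul, Finset.sum_ite_eq, Finset.sum_ite_eq',
      Finset.mem_univ, if_true]
    exact Finset.sum_congr rfl fun l _ => by ring
  set Amat : Matrix (Fin m × Fin n) (Fin d) ℝ :=
    Matrix.of (fun p l => C p.1 l l * X p.2 l) with hAdef
  set Bmat : Matrix (Fin m × Fin n) (Fin d) ℝ :=
    Matrix.of (fun p l => X p.2 l) with hBdef
  have hfact : Ptil = (2:ℝ)⁻¹ • (Amat * Bmatᵀ + Bmat * Amatᵀ) := by
    ext p q
    rw [hent]
    simp only [Matrix.smul_apply, Matrix.add_apply, Matrix.mul_apply, transpose_apply, of_apply,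
      smul_eq_mul, hAdef, hBdef]
    rw [← Finset.sum_add_distrib, Finset.mul_sum]
    exact Finset.sum_congr rfl fun l _ => by ring
  have hkey2 : ∀ x, x ⬝ᵥ Ptil *ᵥ x = (Amatᵀ *ᵥ x) ⬝ᵥ (Bmatᵀ *ᵥ x) := by
    intro x
    rw [hfact, smul_mulVec, dotProduct_smul, add_mulVec, dotProduct_add,
      ← mulVec_mulVec, ← mulVec_mulVec, dotProduct_mulVec x Amat,
      dotProduct_mulVec x Bmat, ← mulVec_transpose, ← mulVec_transpose,
      dotProduct_comm (Bmatᵀ *ᵥ x)]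
    simp only [smul_eq_mul]; ring
  set lam : Fin m × Fin n → ℝ := hHerm.eigenvalues with hlamdef
  set v : (Fin m × Fin n) → (Fin m × Fin n) → ℝ := fun h i => hHerm.eigenvectorBasis h i
    with hvdef
  have hdot : ∀ h h', v h ⬝ᵥ v h' = if h = h' then 1 else 0 := eigvec_dot hHerm
  have hform : ∀ x, x ⬝ᵥ Ptil *ᵥ x = ∑ h, lam h * (v h ⬝ᵥ x)^2 := form_eq hHerm
  set P : Finset (Fin m × Fin n) := Finset.univ.filter (fun h => 0 < lam h) with hPdef
  set N : Finset (Fin m × Fin n) := Finset.univ.filter (fun h => lam h < 0) with hNdef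
  -- coefficients of eigenvector combinations
  have hcoef : ∀ (s : Finset (Fin m × Fin n)) (c : {h // h ∈ s} → ℝ) (h : Fin m × Fin n),
      v h ⬝ᵥ (∑ l : {h // h ∈ s}, c l • v l.1)
        = if hh : h ∈ s then c ⟨h, hh⟩ else 0 := by
    intro s c h
    have step : v h ⬝ᵥ (∑ l : {h // h ∈ s}, c l • v l.1)
        = ∑ l : {h // h ∈ s}, c l * (v h ⬝ᵥ v l.1) := by
      simp only [dotProduct, Finset.sum_apply, Pi.smul_apply, smul_eq_mul, Finset.mul_sum]
      rw [Finset.sum_comm]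
      exact Finset.sum_congr rfl fun l _ =>
        Finset.sum_congr rfl fun i _ => by ring
    rw [step]
    simp only [hdot]
    by_cases hh : h ∈ s
    · rw [dif_pos hh]
      rw [Finset.sum_eq_single ⟨h, hh⟩]
      · simp
      · intro l _ hl
        have : ¬ h = l.1 := fun he => hl (by apply Subtype.ext; exact he.symm)
        simp [this]
      · simp
    · rw [dif_neg hh]
      apply Finset.sum_eq_zero
      intro l _
      have : ¬ h = l.1 := fun he => hh (he ▸ l.2)
      simp [this]
  -- (i) positive eigenvalue count
  have hcard_pos : P.card ≤ d := by
    have := dim_aux (fun (l : {h // h ∈ P}) => v l.1) (Bmatᵀ.mulVecLin)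
      (fun x => 0 < x ⬝ᵥ Ptil *ᵥ x)
      (by
        intro c hc
        rw [hform]
        obtain ⟨l0, hl0⟩ := Function.ne_iff.mp hc
        apply Finset.sum_pos' _ ⟨l0.1, Finset.mem_univ _, ?_⟩
        · intro h _
          rw [hcoef]
          by_cases hh : h ∈ P
          · rw [dif_pos hh]
            have : 0 < lam h := (Finset.mem_filter.mp hh).2
            positivity
          · rw [dif_neg hh]; simp
        · rw [hcoef, dif_pos l0.2]
          have hlam : 0 < lam l0.1 := (Finset.mem_filter.mp l0.2).2
          have hceq : c ⟨l0.1, l0.2⟩ = c l0 := by congr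
          rw [hceq]
          have h2 : 0 < (c l0)^2 := (sq_nonneg (c l0)).lt_of_ne (Ne.symm (pow_ne_zero 2 hl0))
          exact mul_pos hlam h2)
      (by
        intro x hx
        show ¬ (0 < x ⬝ᵥ Ptil *ᵥ x)
        rw [hkey2]
        have hbx : Bmatᵀ *ᵥ x = 0 := hx
        rw [hbx, dotProduct_zero]
        exact lt_irrefl 0)
    simpa [Fintype.card_coe] using this
  -- (i) negative eigenvalue count
  have hcard_neg : N.card ≤ d := by
    have := dim_aux (fun (l : {h // h ∈ N}) => v l.1) (Bmatᵀ.mulVecLin)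
      (fun x => x ⬝ᵥ Ptil *ᵥ x < 0)
      (by
        intro c hc
        rw [hform]
        obtain ⟨l0, hl0⟩ := Function.ne_iff.mp hc
        have hpos : 0 < ∑ h, -(lam h * (v h ⬝ᵥ ∑ l : {h // h ∈ N}, c l • v l.1)^2) := by
          apply Finset.sum_pos' _ ⟨l0.1, Finset.mem_univ _, ?_⟩
          · intro h _
            rw [hcoef]
            by_cases hh : h ∈ N
            · rw [dif_pos hh]
              have : lam h < 0 := (Finset.mem_filter.mp hh).2
              nlinarith [sq_nonneg (c ⟨h, hh⟩)]
            · rw [dif_neg hh]; simp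
          · rw [hcoef, dif_pos l0.2]
            have hlam : lam l0.1 < 0 := (Finset.mem_filter.mp l0.2).2
            have hc0 : c ⟨l0.1, l0.2⟩ = c l0 := by congr
            rw [hc0]
            have h2 : 0 < (c l0)^2 := (sq_nonneg (c l0)).lt_of_ne (Ne.symm (pow_ne_zero 2 hl0))
            nlinarith
        rw [Finset.sum_neg_distrib] at hpos
        linarith)
      (by
        intro x hx
        show ¬ (x ⬝ᵥ Ptil *ᵥ x < 0)
        rw [hkey2]
        have hbx : Bmatᵀ *ᵥ x = 0 := hx
        rw [hbx, dotProduct_zero]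
        exact lt_irrefl 0)
    simpa [Fintype.card_coe] using this
  have hrank2d : Ptil.rank ≤ 2 * d := by
    have h0 : Ptil.rank = (Finset.univ.filter fun h => lam h ≠ 0).card := by
      rw [hHerm.rank_eq_card_non_zero_eigs, Fintype.card_subtype]
    have hsub : (Finset.univ.filter fun h => lam h ≠ 0) ⊆ P ∪ N := by
      intro h hh
      have hne : lam h ≠ 0 := (Finset.mem_filter.mp hh).2
      rcases hne.lt_or_gt with h1 | h1
      · exact Finset.mem_union_right _ (Finset.mem_filter.mpr ⟨Finset.mem_univ _, h1⟩)
      · exact Finset.mem_union_left _ (Finset.mem_filter.mpr ⟨Finset.mem_univ _, h1⟩)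
    calc Ptil.rank = (Finset.univ.filter fun h => lam h ≠ 0).card := h0
      _ ≤ (P ∪ N).card := Finset.card_le_card hsub
      _ ≤ P.card + N.card := Finset.card_union_le _ _
      _ ≤ d + d := add_le_add hcard_pos hcard_neg
      _ = 2 * d := (two_mul d).symm
  refine ⟨⟨hcard_pos, hcard_neg, hrank2d⟩, ?_, ?_⟩
  · -- (ii)
    intro hX
    set D : Fin d → ℝ := fun l => (m:ℝ) * ∑ g, C g l l with hD
    have hDpos : ∀ l, 0 < D l := by
      intro l
      obtain ⟨g0, hg0⟩ := hCpos l
      have hsum : 0 < ∑ g, C g l l :=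
        Finset.sum_pos' (fun g _ => hCnn g l) ⟨g0, Finset.mem_univ _, hg0⟩
      have hm' : (0:ℝ) < m := by exact_mod_cast hm
      exact mul_pos hm' hsum
    set S : Matrix (Fin m × Fin n) (Fin n) ℝ :=
      Matrix.of (fun p j => if p.2 = j then 1 else 0) with hS
    have hSPS : Sᵀ * Ptil * S = X * diagonal D * Xᵀ := by
      ext i j
      simp only [Matrix.mul_apply, Matrix.transpose_apply, Matrix.of_apply, hent, hS,
        Matrix.diagonal_apply, Fintype.sum_prod_type, ite_mul, mul_ite, one_mul, zero_mul,
        mul_zero, mul_one, Finset.sum_ite_eq, Finset.sum_ite_eq', Finset.mem_univ, if_true]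
      calc ∑ k : Fin m, ∑ g : Fin m, ∑ l : Fin d,
            X i l * X j l * (2⁻¹ * (C g l l + C k l l))
          = ∑ k : Fin m, ∑ l : Fin d, ∑ g : Fin m,
              X i l * X j l * (2⁻¹ * (C g l l + C k l l)) :=
            Finset.sum_congr rfl fun k _ => Finset.sum_comm
        _ = ∑ l : Fin d, ∑ k : Fin m, ∑ g : Fin m,
              X i l * X j l * (2⁻¹ * (C g l l + C k l l)) := Finset.sum_comm
        _ = ∑ l : Fin d, X i l * D l * X j l := by
            refine Finset.sum_congr rfl fun l _ => ?_
            have hsum : ∀ k : Fin m, ∑ g, X i l * X j l * (2⁻¹ * (C g l l + C k l l))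
                = X i l * X j l * 2⁻¹ * (∑ g, C g l l)
                  + (m:ℝ) * (X i l * X j l * 2⁻¹ * C k l l) := by
              intro k
              calc ∑ g, X i l * X j l * (2⁻¹ * (C g l l + C k l l))
                  = ∑ g, (X i l * X j l * 2⁻¹ * C g l l
                      + X i l * X j l * 2⁻¹ * C k l l) :=
                    Finset.sum_congr rfl fun g _ => by ring
                _ = _ := by
                    rw [Finset.sum_add_distrib, ← Finset.mul_sum, Finset.sum_const]
                    simp [nsmul_eq_mul]
            simp only [hsum]
            rw [Finset.sum_add_distrib, Finset.sum_const, ← Finset.mul_sum, ← Finset.mul_sum]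
            simp only [nsmul_eq_mul, Finset.card_univ, Fintype.card_fin, hD]
            ring
    set E : Matrix (Fin d) (Fin d) ℝ := diagonal (fun l => Real.sqrt (D l)) with hE
    have hEE : E * Eᵀ = diagonal D := by
      have hfun : (fun l => Real.sqrt (D l) * Real.sqrt (D l)) = D :=
        funext fun l => Real.mul_self_sqrt (hDpos l).le
      rw [hE, diagonal_transpose, diagonal_mul_diagonal, hfun]
    have hEdet : IsUnit E.det := by
      rw [hE, det_diagonal]
      exact isUnit_iff_ne_zero.mpr
        (Finset.prod_pos fun l _ => Real.sqrt_pos.mpr (hDpos l)).ne'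
    have hXE : (X * E).rank = d := by
      rw [Matrix.rank_mul_eq_left_of_isUnit_det E X hEdet, hX]
    have hXDX : (X * diagonal D * Xᵀ).rank = d := by
      have hfac : X * diagonal D * Xᵀ = (X * E) * (X * E)ᵀ := by
        rw [Matrix.transpose_mul, ← Matrix.mul_assoc, Matrix.mul_assoc X E Eᵀ, hEE]
      rw [hfac, Matrix.rank_self_mul_transpose, hXE]
    calc d = (X * diagonal D * Xᵀ).rank := hXDX.symm
      _ = (Sᵀ * Ptil * S).rank := by rw [hSPS]
      _ ≤ (Sᵀ * Ptil).rank := Matrix.rank_mul_le_left _ _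
      _ ≤ Ptil.rank := Matrix.rank_mul_le_right _ _
  · -- (iii)
    intro hnz horto
    set Nv : Fin d → ℝ := fun l => ∑ i, X i l * X i l with hNvdef
    have hNvpos : ∀ l, 0 < Nv l := by
      intro l
      obtain ⟨i0, hi0⟩ := Function.ne_iff.mp (hnz l)
      refine Finset.sum_pos' (fun i _ => mul_self_nonneg _) ⟨i0, Finset.mem_univ _, ?_⟩
      simp only [Pi.zero_apply] at hi0
      simpa [mul_self_pos] using hi0
    have hcol : ∀ l l', (∑ i, X i l * X i l') = if l = l' then Nv l else 0 := by
      intro l l'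
      rcases eq_or_ne l l' with rfl | hne
      · simp [hNvdef]
      · have := horto l l' hne
        simpa [dotProduct, hne] using this
    choose gg hgg using hCpos
    set w : Fin d → (Fin m × Fin n → ℝ) :=
      fun l p => if p.1 = gg l then X p.2 l else 0 with hw
    have hBx : ∀ (c : Fin d → ℝ) l0,
        (Bmatᵀ *ᵥ (∑ l, c l • w l)) l0 = c l0 * Nv l0 := by
      intro c l0
      simp only [mulVec, dotProduct, transpose_apply, hBdef, hw, Matrix.of_apply,
        Finset.sum_apply, Pi.smul_apply, smul_eq_mul, Finset.mul_sum]
      rw [Finset.sum_comm]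
      have hper : ∀ l', ∑ p : Fin m × Fin n,
          X p.2 l0 * (c l' * (if p.1 = gg l' then X p.2 l' else 0))
            = c l' * ∑ i, X i l0 * X i l' := by
        intro l'
        rw [Fintype.sum_prod_type, Finset.sum_comm, Finset.mul_sum]
        refine Finset.sum_congr rfl fun i _ => ?_
        simp [mul_ite, Finset.sum_ite_eq', mul_comm, mul_left_comm]
      simp only [hper, hcol]
      simp
    have hAx : ∀ (c : Fin d → ℝ) l0,
        (Amatᵀ *ᵥ (∑ l, c l • w l)) l0 = c l0 * (C (gg l0) l0 l0 * Nv l0) := by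
      intro c l0
      simp only [mulVec, dotProduct, transpose_apply, hAdef, hw, Matrix.of_apply,
        Finset.sum_apply, Pi.smul_apply, smul_eq_mul, Finset.mul_sum]
      rw [Finset.sum_comm]
      have hper : ∀ l', ∑ p : Fin m × Fin n,
          C p.1 l0 l0 * X p.2 l0 * (c l' * (if p.1 = gg l' then X p.2 l' else 0))
            = c l' * C (gg l') l0 l0 * ∑ i, X i l0 * X i l' := by
        intro l'
        rw [Fintype.sum_prod_type, Finset.sum_comm, Finset.mul_sum]
        refine Finset.sum_congr rfl fun i _ => ?_
        simp [mul_ite, Finset.sum_ite_eq', mul_comm, mul_left_comm]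
      simp only [hper, hcol]
      simp [mul_comm, mul_left_comm, mul_assoc]
    let f : ((Fin m × Fin n) → ℝ) →ₗ[ℝ] ({h // h ∈ P} → ℝ) :=
      { toFun := fun x h => v h.1 ⬝ᵥ x
        map_add' := by intro a b; funext h; simp [dotProduct_add]
        map_smul' := by intro r a; funext h; simp [dotProduct_smul] }
    have hge : d ≤ P.card := by
      have hdim := dim_aux w f (fun x => 0 < x ⬝ᵥ Ptil *ᵥ x)
        (by
          intro c hc
          show 0 < (∑ l, c l • w l) ⬝ᵥ Ptil *ᵥ (∑ l, c l • w l)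
          rw [hkey2]
          simp only [dotProduct, hAx, hBx]
          obtain ⟨l0, hl0⟩ := Function.ne_iff.mp hc
          refine Finset.sum_pos' (fun l _ => ?_) ⟨l0, Finset.mem_univ _, ?_⟩
          · have heq : (c l * (C (gg l) l l * Nv l)) * (c l * Nv l)
                = C (gg l) l l * (Nv l)^2 * (c l)^2 := by ring
            rw [heq]
            exact mul_nonneg (mul_nonneg (hCnn _ _) (sq_nonneg _)) (sq_nonneg _)
          · have heq : (c l0 * (C (gg l0) l0 l0 * Nv l0)) * (c l0 * Nv l0)
                = C (gg l0) l0 l0 * (Nv l0)^2 * (c l0)^2 := by ring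
            rw [heq]
            have h1 : 0 < (Nv l0)^2 := pow_pos (hNvpos l0) 2
            have h2 : 0 < (c l0)^2 :=
              (sq_nonneg (c l0)).lt_of_ne (Ne.symm (pow_ne_zero 2 hl0))
            exact mul_pos (mul_pos (hgg l0) h1) h2)
        (by
          intro x hx
          show ¬ (0 < x ⬝ᵥ Ptil *ᵥ x)
          rw [hform]
          refine not_lt.mpr (Finset.sum_nonpos fun h _ => ?_)
          by_cases hh : h ∈ P
          · have hvz : v h ⬝ᵥ x = 0 := by
              have := congrFun hx ⟨h, hh⟩
              simpa [f] using this
            rw [hvz]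
            simp
          · have hle : lam h ≤ 0 := by
              by_contra hlt
              exact hh (Finset.mem_filter.mpr ⟨Finset.mem_univ _, lt_of_not_ge hlt⟩)
            exact mul_nonpos_iff.mpr (Or.inr ⟨hle, sq_nonneg _⟩))
      simpa [Fintype.card_coe] using hdim
    exact le_antisymm hcard_pos hge

end
end

section
/- Let X ∈ ℝ^{n×d} with columns X_{·1},…,X_{·d}, let C^(1),…,C^(m) be d×d diagonal matrices with nonnegative entries with min_{i∈[d]} max_{g∈[m]} C^(g)_{ii} > 0, and let P̃ be the block matrix with (g,k) block X((C^(g)+C^(k))/2)X^T. Then L_S L_S^T = Σ_{j=1}^d α^(j)(α^(j))^T ⊗ X_{·j}X_{·j}^T (Kronecker product, conforming with the m×m block structure), and consequently L_S L_S^T − P̃ is positive semidefinite of rank at most d. -/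
open Matrix BigOperators

noncomputable section

lemma keyid (lam b c ug uk vg vk : ℝ) (hlam : 0 < lam) (h2 : b * c = lam)
    (hg : 2 * lam * ug = b + c * vg) (hk : 2 * lam * uk = b + c * vk) :
    lam * ug * uk - (vg + vk) / 2
      = ((b - c * vg) / (2 * Real.sqrt lam)) * ((b - c * vk) / (2 * Real.sqrt lam)) := by
  have hs : Real.sqrt lam * Real.sqrt lam = lam := Real.mul_self_sqrt hlam.le
  have h4 : (2 * Real.sqrt lam) * (2 * Real.sqrt lam) = 4 * lam := by
    rw [mul_mul_mul_comm, hs]; ring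
  rw [div_mul_div_comm, h4, eq_div_iff (by positivity)]
  linear_combination (2*lam*uk) * hg + (b + c*vg) * hk + (2*(vg+vk)) * h2

/-- Let `X ∈ ℝ^{n×d}`, let `C^(1),…,C^(m)` be nonnegative `d×d` diagonal
matrices with `min_i max_g C^(g)_{ii} > 0`, and let `P̃` be the block matrix with `(g,k)`
block `X((C^(g)+C^(k))/2)Xᵀ`.  With `α^(j) = α(v_j)` for `v_j = (C^(1)_{jj},…,C^(m)_{jj})`
(where `α(v) = √(λ₊(v)) • u(v)` and `u(v)` is the unique unit-norm positive eigenvector of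
`H(v)` for `λ₊(v)`), and `L_S` the block matrix whose `g`-th `n×d` block is `X S^(g)` with
`S^(g) = diag(α^(1)_g,…,α^(d)_g)`, one has
`L_S L_Sᵀ = Σ_j α^(j)(α^(j))ᵀ ⊗ X_{·j}X_{·j}ᵀ`, and consequently `L_S L_Sᵀ − P̃` is
positive semidefinite of rank at most `d`. -/
theorem statement4 (n d m : ℕ) (hm : 0 < m)
    (X : Matrix (Fin n) (Fin d) ℝ)
    (C : Fin m → Matrix (Fin d) (Fin d) ℝ)
    (hCdiag : ∀ g, (C g).IsDiag) (hCnn : ∀ g i, 0 ≤ C g i i)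
    (hCpos : ∀ i, ∃ g, 0 < C g i i)
    (u : Fin d → Fin m → ℝ)
    (hu_unit : ∀ j, l2 (u j) = 1) (hu_pos : ∀ j g, 0 < u j g)
    (hu_eig : ∀ j, (Hmat fun g => C g j j).mulVec (u j)
      = lamPlus (fun g => C g j j) • u j)
    (α : Fin d → Fin m → ℝ)
    (hα : ∀ j, α j = Real.sqrt (lamPlus fun g => C g j j) • u j)
    (LS : Matrix (Fin m × Fin n) (Fin d) ℝ)
    (hLS : ∀ p l, LS p l = X p.2 l * α l p.1)
    (Ptil : Matrix (Fin m × Fin n) (Fin m × Fin n) ℝ)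
    (hPtil : ∀ p q, Ptil p q = (X * ((2:ℝ)⁻¹ • (C p.1 + C q.1)) * Xᵀ) p.2 q.2) :
    LS * LSᵀ = (∑ j, Matrix.kroneckerMap (· * ·)
        (Matrix.vecMulVec (α j) (α j))
        (Matrix.vecMulVec (fun i => X i j) (fun i => X i j))) ∧
    (LS * LSᵀ - Ptil).PosSemidef ∧
    (LS * LSᵀ - Ptil).rank ≤ d := by
  classical
  set lam : Fin d → ℝ := fun l => lamPlus (fun g => C g l l) with hlamdef
  set β : Fin d → ℝ := fun l => ∑ g, C g l l * u l g with hβdef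
  set γ : Fin d → ℝ := fun l => ∑ g, u l g with hγdef
  have hγl : ∀ l, γ l = ∑ g, u l g := fun l => rfl
  have hβl : ∀ l, β l = ∑ g, C g l l * u l g := fun l => rfl
  have husq : ∀ l, ∑ g, u l g ^ 2 = 1 := by
    intro l
    have h := hu_unit l
    rw [l2, Real.sqrt_eq_one] at h
    exact h
  -- pointwise eigen equation
  have h1 : ∀ l g, 2 * lam l * u l g = β l + γ l * C g l l := by
    intro l g
    have h := congrFun (hu_eig l) g
    simp only [Matrix.mulVec, dotProduct, Hmat, Matrix.of_apply,
      Pi.smul_apply, smul_eq_mul] at h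
    have expand : ∑ k, (C g l l + C k l l) / 2 * u l k
        = (γ l * C g l l + β l) / 2 := by
      rw [hγl, hβl, Finset.sum_mul, ← Finset.sum_add_distrib, Finset.sum_div]
      apply Finset.sum_congr rfl
      intro k _
      ring
    rw [expand] at h
    linarith
  -- beta * gamma = lam
  have h2 : ∀ l, β l * γ l = lam l := by
    intro l
    have hsum : ∑ g, 2 * lam l * u l g * u l g
        = ∑ g, (β l + γ l * C g l l) * u l g :=
      Finset.sum_congr rfl fun g _ => by rw [h1 l g]
    have lhs : ∑ g, 2 * lam l * u l g * u l g = 2 * lam l := by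
      rw [show (∑ g, 2 * lam l * u l g * u l g) = 2 * lam l * ∑ g, u l g ^ 2 by
        rw [Finset.mul_sum]; exact Finset.sum_congr rfl fun g _ => by ring]
      rw [husq l]; ring
    have rhs : ∑ g, (β l + γ l * C g l l) * u l g = 2 * (β l * γ l) := by
      rw [show (∑ g, (β l + γ l * C g l l) * u l g)
          = β l * (∑ g, u l g) + γ l * ∑ g, C g l l * u l g by
        rw [Finset.mul_sum, Finset.mul_sum, ← Finset.sum_add_distrib]
        exact Finset.sum_congr rfl fun g _ => by ring]
      rw [← hγl, ← hβl]; ring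
    rw [lhs, rhs] at hsum
    linarith
  have hγpos : ∀ l, 0 < γ l := fun l =>
    Finset.sum_pos (fun g _ => hu_pos l g) (Finset.univ_nonempty_iff.mpr ⟨⟨0, hm⟩⟩)
  have hβpos : ∀ l, 0 < β l := by
    intro l
    obtain ⟨g0, hg0⟩ := hCpos l
    exact Finset.sum_pos' (fun g _ => mul_nonneg (hCnn g l) (hu_pos l g).le)
      ⟨g0, Finset.mem_univ g0, mul_pos hg0 (hu_pos l g0)⟩
  have hlampos : ∀ l, 0 < lam l := fun l => h2 l ▸ mul_pos (hβpos l) (hγpos l)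
  set w : Fin d → Fin m → ℝ :=
    fun l g => (β l - γ l * C g l l) / (2 * Real.sqrt (lam l)) with hwdef
  have hαα : ∀ l g k, α l g * α l k = lam l * u l g * u l k := by
    intro l g k
    rw [hα l]
    simp only [Pi.smul_apply, smul_eq_mul]
    rw [show Real.sqrt (lamPlus fun g => C g l l) * u l g
          * (Real.sqrt (lamPlus fun g => C g l l) * u l k)
        = Real.sqrt (lam l) * Real.sqrt (lam l) * u l g * u l k by rw [hlamdef]; ring,
      Real.mul_self_sqrt (hlampos l).le]
  have key : ∀ l g k,
      α l g * α l k - (C g l l + C k l l) / 2 = w l g * w l k := by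
    intro l g k
    rw [hαα l g k, hwdef]
    exact keyid (lam l) (β l) (γ l) (u l g) (u l k) (C g l l) (C k l l)
      (hlampos l) (h2 l) (h1 l g) (h1 l k)
  -- Ptilde entries
  have hPtil' : ∀ p q : Fin m × Fin n,
      Ptil p q = ∑ l, X p.2 l * X q.2 l * ((C p.1 l l + C q.1 l l) / 2) := by
    intro p q
    rw [hPtil p q]
    simp only [Matrix.mul_apply, Matrix.transpose_apply, Matrix.smul_apply,
      Matrix.add_apply, smul_eq_mul]
    have inner : ∀ b : Fin d,
        (∑ a, X p.2 a * ((2:ℝ)⁻¹ * (C p.1 a b + C q.1 a b)))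
          = X p.2 b * ((2:ℝ)⁻¹ * (C p.1 b b + C q.1 b b)) := by
      intro b
      apply Finset.sum_eq_single b
      · intro a _ hab
        rw [hCdiag p.1 hab, hCdiag q.1 hab]
        ring
      · intro habs; exact absurd (Finset.mem_univ b) habs
    calc ∑ b, (∑ a, X p.2 a * ((2:ℝ)⁻¹ * (C p.1 a b + C q.1 a b))) * Xᵀ b q.2
        = ∑ b, X p.2 b * ((2:ℝ)⁻¹ * (C p.1 b b + C q.1 b b)) * Xᵀ b q.2 := by
          exact Finset.sum_congr rfl fun b _ => by rw [inner b]
      _ = ∑ l, X p.2 l * X q.2 l * ((C p.1 l l + C q.1 l l) / 2) := by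
          exact Finset.sum_congr rfl fun b _ => by
            rw [Matrix.transpose_apply]; ring
  -- the Z matrix
  set Z : Matrix (Fin m × Fin n) (Fin d) ℝ :=
    Matrix.of (fun p l => w l p.1 * X p.2 l) with hZdef
  have hD : LS * LSᵀ - Ptil = Z * Zᵀ := by
    ext p q
    simp only [Matrix.sub_apply, Matrix.mul_apply, Matrix.transpose_apply,
      hLS, hPtil', hZdef, Matrix.of_apply]
    rw [← Finset.sum_sub_distrib]
    apply Finset.sum_congr rfl
    intro l _
    linear_combination (X p.2 l * X q.2 l) * key l p.1 q.1
  refine ⟨?_, ?_, ?_⟩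
  · ext p q
    simp only [Matrix.mul_apply, Matrix.transpose_apply, hLS, Matrix.sum_apply,
      Matrix.kroneckerMap_apply, Matrix.vecMulVec_apply]
    exact Finset.sum_congr rfl fun l _ => by ring
  · rw [hD]
    have hZt : Zᵀ = Zᴴ := by
      ext p q
      simp [Matrix.conjTranspose_apply]
    rw [hZt]
    exact Matrix.posSemidef_self_mul_conjTranspose Z
  · rw [hD]
    calc (Z * Zᵀ).rank ≤ Z.rank := Matrix.rank_mul_le_left Z Zᵀ
      _ ≤ Fintype.card (Fin d) := Matrix.rank_le_card_width Z
      _ = d := Fintype.card_fin d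


end
end

section
/- Let X ∈ ℝ^{n×d} have nonzero, pairwise orthogonal columns, let C^(1),…,C^(m) be d×d diagonal matrices with nonnegative entries with min_{i∈[d]} max_{g∈[m]} C^(g)_{ii} > 0, and let P̃ be the block matrix with (g,k) block X((C^(g)+C^(k))/2)X^T (so P̃ has exactly d positive eigenvalues). Then Z = ASE(P̃, d) satisfies Z Z^T = L_S L_S^T, and there exists an orthogonal matrix W̃ ∈ O(d) such that Z W̃^T = L_S. -/
open Matrix BigOperators

noncomputable section

/-- Auxiliary: commuting a triple sum. -/
theorem sum_swap3 {a b c : ℕ} (f : Fin a → Fin b → Fin c → ℝ) :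
    ∑ x, ∑ y, ∑ z, f x y z = ∑ z, ∑ x, ∑ y, f x y z := by
  have h1 : ∀ x, ∑ y, ∑ z, f x y z = ∑ z, ∑ y, f x y z := fun x => Finset.sum_comm
  simp_rw [h1]
  exact Finset.sum_comm

set_option maxHeartbeats 1000000 in
/-- Let `X ∈ ℝ^{n×d}` have nonzero pairwise orthogonal columns, let
`C^(1),…,C^(m)` be nonnegative `d×d` diagonal matrices with `min_i max_g C^(g)_{ii} > 0`,
and let `P̃` be the block matrix with `(g,k)` block `X((C^(g)+C^(k))/2)Xᵀ` (so `P̃` has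
exactly `d` positive eigenvalues).  The adjacency spectral embedding `Z = ASE(P̃, d)` is
encoded by `Z = U S^{1/2}` where the columns of `U` are orthonormal eigenvectors of `P̃`
for its `d` largest (all positive) eigenvalues `s₁ ≥ … ≥ s_d > 0`.  Then `Z Zᵀ = L_S L_Sᵀ`
and there is an orthogonal matrix `W̃ ∈ O(d)` with `Z W̃ᵀ = L_S`. -/
theorem statement5 (n d m : ℕ) (hm : 0 < m)
    (X : Matrix (Fin n) (Fin d) ℝ)
    (hXcols : ∀ j, (fun i => X i j) ≠ 0)
    (hXorth : ∀ j k, j ≠ k → (fun i => X i j) ⬝ᵥ (fun i => X i k) = 0)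
    (C : Fin m → Matrix (Fin d) (Fin d) ℝ)
    (hCdiag : ∀ g, (C g).IsDiag) (hCnn : ∀ g i, 0 ≤ C g i i)
    (hCpos : ∀ i, ∃ g, 0 < C g i i)
    (u : Fin d → Fin m → ℝ)
    (hu_unit : ∀ j, l2 (u j) = 1) (hu_pos : ∀ j g, 0 < u j g)
    (hu_eig : ∀ j, (Hmat fun g => C g j j).mulVec (u j)
      = lamPlus (fun g => C g j j) • u j)
    (α : Fin d → Fin m → ℝ)
    (hα : ∀ j, α j = Real.sqrt (lamPlus fun g => C g j j) • u j)
    (LS : Matrix (Fin m × Fin n) (Fin d) ℝ)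
    (hLS : ∀ p l, LS p l = X p.2 l * α l p.1)
    (Ptil : Matrix (Fin m × Fin n) (Fin m × Fin n) ℝ)
    (hPtil : ∀ p q, Ptil p q = (X * ((2:ℝ)⁻¹ • (C p.1 + C q.1)) * Xᵀ) p.2 q.2)
    -- the adjacency spectral embedding of `P̃` into dimension `d`
    (U : Matrix (Fin m × Fin n) (Fin d) ℝ) (s : Fin d → ℝ)
    (hUorth : Uᵀ * U = 1)
    (hUeig : Ptil * U = U * Matrix.diagonal s)
    (hs_pos : ∀ j, 0 < s j) (hs_dec : Antitone s)
    (Z : Matrix (Fin m × Fin n) (Fin d) ℝ)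
    (hZ : Z = U * Matrix.diagonal fun j => Real.sqrt (s j)) :
    Z * Zᵀ = LS * LSᵀ ∧
    ∃ W : Matrix (Fin d) (Fin d) ℝ, Wᵀ * W = 1 ∧ W * Wᵀ = 1 ∧ Z * Wᵀ = LS := by
  -- ## basic scalar facts
  have hXo : ∀ l l', l ≠ l' → ∑ i, X i l * X i l' = 0 := by
    intro l l' h
    simpa [dotProduct] using hXorth l l' h
  have hXpos : ∀ l, 0 < ∑ i, X i l * X i l := by
    intro l
    obtain ⟨i, hi⟩ := Function.ne_iff.mp (hXcols l)
    exact Finset.sum_pos' (fun j _ => mul_self_nonneg _)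
      ⟨i, Finset.mem_univ i, mul_self_pos.mpr (by simpa using hi)⟩
  have hLpos : ∀ l, 0 < lamPlus (fun g => C g l l) := by
    intro l
    obtain ⟨g0, hg0⟩ := hCpos l
    have h1 : 0 < l1 (fun g => C g l l) := by
      unfold l1
      exact Finset.sum_pos' (fun g _ => abs_nonneg _)
        ⟨g0, Finset.mem_univ g0, abs_pos.mpr hg0.ne'⟩
    have h2 : 0 ≤ Real.sqrt m * l2 (fun g => C g l l) :=
      mul_nonneg (Real.sqrt_nonneg _) (Real.sqrt_nonneg _)
    unfold lamPlus
    linarith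
  have hu2 : ∀ l, ∑ g, u l g ^ 2 = 1 := by
    intro l
    have h := hu_unit l
    unfold l2 at h
    have hnn : 0 ≤ ∑ g, u l g ^ 2 := Finset.sum_nonneg fun g _ => sq_nonneg _
    rw [← Real.sq_sqrt hnn, h]; norm_num
  have hα2 : ∀ l, ∑ g, α l g * α l g = lamPlus (fun g => C g l l) := by
    intro l
    rw [hα l]
    simp only [Pi.smul_apply, smul_eq_mul]
    have e : ∑ g, (Real.sqrt (lamPlus (fun g => C g l l)) * u l g) *
        (Real.sqrt (lamPlus (fun g => C g l l)) * u l g)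
        = (Real.sqrt (lamPlus (fun g => C g l l)) * Real.sqrt (lamPlus (fun g => C g l l)))
          * ∑ g, u l g ^ 2 := by
      rw [Finset.mul_sum]
      exact Finset.sum_congr rfl fun g _ => by ring
    rw [e, Real.mul_self_sqrt (hLpos l).le, hu2 l, mul_one]
  -- pointwise eigen-equation for α
  have hαeig : ∀ l g0, ∑ h, ((C g0 l l + C h l l) / 2) * α l h
      = lamPlus (fun g => C g l l) * α l g0 := by
    intro l g0
    have h := congrFun (hu_eig l) g0
    simp only [Matrix.mulVec, dotProduct, Hmat, Matrix.of_apply, Pi.smul_apply,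
      smul_eq_mul] at h
    rw [hα l]
    simp only [Pi.smul_apply, smul_eq_mul]
    calc ∑ h', ((C g0 l l + C h' l l) / 2) * (Real.sqrt (lamPlus fun g => C g l l) * u l h')
        = Real.sqrt (lamPlus fun g => C g l l) *
            ∑ h', ((C g0 l l + C h' l l) / 2) * u l h' := by
          rw [Finset.mul_sum]; exact Finset.sum_congr rfl fun h' _ => by ring
      _ = Real.sqrt (lamPlus fun g => C g l l) * (lamPlus (fun g => C g l l) * u l g0) := by
          rw [h]
      _ = lamPlus (fun g => C g l l) * (Real.sqrt (lamPlus fun g => C g l l) * u l g0) := by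
          ring
  -- split eigen-equation for u
  have heig2 : ∀ l g, C g l l * (∑ h, u l h) + (∑ h, C h l l * u l h)
      = 2 * lamPlus (fun g' => C g' l l) * u l g := by
    intro l g
    have h := congrFun (hu_eig l) g
    simp only [Matrix.mulVec, dotProduct, Hmat, Matrix.of_apply, Pi.smul_apply,
      smul_eq_mul] at h
    have e : ∑ h', ((C g l l + C h' l l) / 2) * u l h'
        = (C g l l * (∑ h, u l h) + ∑ h, C h l l * u l h) / 2 := by
      rw [Finset.mul_sum, ← Finset.sum_add_distrib, Finset.sum_div]
      exact Finset.sum_congr rfl fun h' _ => by ring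
    rw [e] at h
    linarith
  -- ## the diagonal matrix μ
  set μ : Fin d → ℝ := fun l => (∑ i, X i l * X i l) * lamPlus (fun g => C g l l) with hμdef
  have hμpos : ∀ l, 0 < μ l := fun l => mul_pos (hXpos l) (hLpos l)
  -- ## key 1 : LSᵀ * LS = diagonal μ
  have key1 : LSᵀ * LS = Matrix.diagonal μ := by
    ext l l'
    rw [Matrix.mul_apply]
    simp only [Matrix.transpose_apply, hLS]
    rw [Fintype.sum_prod_type]
    have e : ∑ g : Fin m, ∑ i : Fin n,
        X (g, i).2 l * α l (g, i).1 * (X (g, i).2 l' * α l' (g, i).1)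
        = (∑ i, X i l * X i l') * (∑ g, α l g * α l' g) := by
      rw [Finset.sum_mul_sum, Finset.sum_comm]
      exact Finset.sum_congr rfl fun g _ => Finset.sum_congr rfl fun i _ => by ring
    rw [e]
    rcases eq_or_ne l l' with rfl | hne
    · rw [Matrix.diagonal_apply_eq, hα2 l]
    · rw [hXo l l' hne, Matrix.diagonal_apply_ne _ hne, zero_mul]
  -- ## entrywise formula for Ptil
  have hPt : ∀ p q : Fin m × Fin n, Ptil p q
      = ∑ a, X p.2 a * X q.2 a * ((C p.1 a a + C q.1 a a) / 2) := by
    intro p q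
    rw [hPtil]
    have hM : (2:ℝ)⁻¹ • (C p.1 + C q.1)
        = Matrix.diagonal (fun a => (C p.1 a a + C q.1 a a) / 2) := by
      ext a b
      by_cases hab : a = b
      · subst hab
        simp only [Matrix.smul_apply, Matrix.add_apply, Matrix.diagonal_apply_eq,
          smul_eq_mul]
        ring
      · simp only [Matrix.smul_apply, Matrix.add_apply, Matrix.diagonal_apply_ne _ hab,
          hCdiag p.1 hab, hCdiag q.1 hab, smul_eq_mul, add_zero, mul_zero]
    rw [hM, Matrix.mul_apply]
    simp only [Matrix.mul_diagonal, Matrix.transpose_apply]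
    exact Finset.sum_congr rfl fun a _ => by ring
  -- ## symmetry of Ptil
  have hPsym : Ptilᵀ = Ptil := by
    ext p q
    rw [Matrix.transpose_apply, hPt, hPt]
    exact Finset.sum_congr rfl fun a _ => by ring
  -- ## key 2 : Ptil * LS = LS * diagonal μ
  have key2 : Ptil * LS = LS * Matrix.diagonal μ := by
    ext p l
    rw [Matrix.mul_apply, Matrix.mul_diagonal]
    simp only [hPt, hLS]
    rw [Fintype.sum_prod_type]
    have e1 : ∑ h : Fin m, ∑ j : Fin n,
        (∑ a, X p.2 a * X (h, j).2 a * ((C p.1 a a + C (h, j).1 a a) / 2))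
          * (X (h, j).2 l * α l (h, j).1)
        = ∑ a, ∑ h : Fin m, ∑ j : Fin n,
            X p.2 a * X j a * ((C p.1 a a + C h a a) / 2) * (X j l * α l h) := by
      simp_rw [Finset.sum_mul]
      exact sum_swap3 _
    rw [e1]
    have e2 : ∀ a, ∑ h : Fin m, ∑ j : Fin n,
        X p.2 a * X j a * ((C p.1 a a + C h a a) / 2) * (X j l * α l h)
        = (∑ j, X j a * X j l) * (X p.2 a * ∑ h, ((C p.1 a a + C h a a) / 2) * α l h) := by
      intro a
      conv_rhs => rw [Finset.mul_sum, Finset.sum_mul_sum, Finset.sum_comm]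
      exact Finset.sum_congr rfl fun h _ => Finset.sum_congr rfl fun j _ => by ring
    simp_rw [e2]
    rw [Finset.sum_eq_single l]
    · rw [hαeig l p.1]
      simp only [hμdef]
      ring
    · intro a _ hal
      rw [hXo a l hal, zero_mul]
    · intro h; exact absurd (Finset.mem_univ l) h
  -- ## the quadratic form of Ptil is ≤ 0 on the orthogonal complement of the columns of LS
  have neg : ∀ r : Fin m × Fin n → ℝ, (∀ l, ∑ p, LS p l * r p = 0) →
      ∑ p, r p * ∑ q, Ptil p q * r q ≤ 0 := by
    intro r hr
    set y : Fin d → Fin m → ℝ := fun a g => ∑ i, X i a * r (g, i) with hy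
    -- inner product against row p
    have inner : ∀ p : Fin m × Fin n, ∑ q, Ptil p q * r q
        = ∑ a, X p.2 a * ∑ h, ((C p.1 a a + C h a a) / 2) * y a h := by
      intro p
      simp only [hPt]
      rw [Fintype.sum_prod_type]
      have e1 : ∑ h : Fin m, ∑ j : Fin n,
          (∑ a, X p.2 a * X (h, j).2 a * ((C p.1 a a + C (h, j).1 a a) / 2)) * r (h, j)
          = ∑ a, ∑ h : Fin m, ∑ j : Fin n,
              X p.2 a * X j a * ((C p.1 a a + C h a a) / 2) * r (h, j) := by
        simp_rw [Finset.sum_mul]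
        exact sum_swap3 _
      rw [e1]
      refine Finset.sum_congr rfl fun a _ => ?_
      simp only [hy]
      conv_rhs => rw [Finset.mul_sum]
      refine Finset.sum_congr rfl fun h _ => ?_
      conv_rhs => rw [Finset.mul_sum, Finset.mul_sum]
      refine Finset.sum_congr rfl fun j _ => ?_
      ring
    have expand : ∑ p, r p * ∑ q, Ptil p q * r q
        = ∑ a, (∑ g, C g a a * y a g) * (∑ g, y a g) := by
      simp_rw [inner]
      have e0 : ∑ p : Fin m × Fin n,
          r p * ∑ a, X p.2 a * ∑ h, ((C p.1 a a + C h a a) / 2) * y a h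
          = ∑ p : Fin m × Fin n,
              ∑ a, r p * (X p.2 a * ∑ h, ((C p.1 a a + C h a a) / 2) * y a h) :=
        Finset.sum_congr rfl fun p _ => Finset.mul_sum _ _ _
      rw [e0, Fintype.sum_prod_type]
      have e1 : ∑ g : Fin m, ∑ i : Fin n,
          ∑ a, r (g, i) * (X (g, i).2 a * ∑ h, ((C (g, i).1 a a + C h a a) / 2) * y a h)
          = ∑ a, ∑ g : Fin m, ∑ i : Fin n,
              r (g, i) * (X i a * ∑ h, ((C g a a + C h a a) / 2) * y a h) := by
        exact sum_swap3 _
      rw [e1]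
      refine Finset.sum_congr rfl fun a _ => ?_
      have e2 : ∑ g : Fin m, ∑ i : Fin n,
          r (g, i) * (X i a * ∑ h, ((C g a a + C h a a) / 2) * y a h)
          = ∑ g, (∑ h, ((C g a a + C h a a) / 2) * y a h) * y a g := by
        refine Finset.sum_congr rfl fun g _ => ?_
        simp only [hy]
        conv_rhs => rw [Finset.mul_sum]
        refine Finset.sum_congr rfl fun i _ => ?_
        ring
      rw [e2]
      calc ∑ g, (∑ h, ((C g a a + C h a a) / 2) * y a h) * y a g
          = ∑ g, ∑ h, ((C g a a * y a g) * y a h / 2 + y a g * (C h a a * y a h) / 2) := by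
            refine Finset.sum_congr rfl fun g _ => ?_
            rw [Finset.sum_mul]
            exact Finset.sum_congr rfl fun h _ => by ring
        _ = (∑ g, ∑ h, (C g a a * y a g) * y a h) / 2
            + (∑ g, ∑ h, y a g * (C h a a * y a h)) / 2 := by
            simp_rw [Finset.sum_add_distrib, ← Finset.sum_div]
        _ = ((∑ g, C g a a * y a g) * (∑ h, y a h)) / 2
            + ((∑ g, y a g) * (∑ h, C h a a * y a h)) / 2 := by
            rw [← Finset.sum_mul_sum, ← Finset.sum_mul_sum]
        _ = (∑ g, C g a a * y a g) * (∑ g, y a g) := by ring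
    rw [expand]
    refine Finset.sum_nonpos fun a _ => ?_
    -- the constraint : y a ⟂ u a
    have hcon : ∑ g, α a g * y a g = 0 := by
      have h := hr a
      rw [Fintype.sum_prod_type] at h
      calc ∑ g, α a g * y a g
          = ∑ g : Fin m, ∑ i : Fin n, X (g, i).2 a * α a (g, i).1 * r (g, i) := by
            refine Finset.sum_congr rfl fun g _ => ?_
            simp only [hy]
            rw [Finset.mul_sum]
            exact Finset.sum_congr rfl fun i _ => by ring
        _ = 0 := by simp only [hLS] at h; exact h
    have hu0 : ∑ g, u a g * y a g = 0 := by
      have e : ∑ g, α a g * y a g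
          = Real.sqrt (lamPlus fun g => C g a a) * ∑ g, u a g * y a g := by
        rw [Finset.mul_sum]
        refine Finset.sum_congr rfl fun g _ => ?_
        rw [hα a]
        simp only [Pi.smul_apply, smul_eq_mul]
        ring
      rw [e] at hcon
      have hsq : Real.sqrt (lamPlus fun g => C g a a) ≠ 0 :=
        (Real.sqrt_pos.mpr (hLpos a)).ne'
      exact (mul_eq_zero.mp hcon).resolve_left hsq
    -- combine with the eigen-equation
    have hA : 0 < ∑ h, u a h := by
      have : Nonempty (Fin m) := ⟨⟨0, hm⟩⟩
      exact Finset.sum_pos (fun h _ => hu_pos a h) Finset.univ_nonempty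
    have hB : 0 ≤ ∑ h, C h a a * u a h :=
      Finset.sum_nonneg fun h _ => mul_nonneg (hCnn h a) (hu_pos a h).le
    have hkey : (∑ h, u a h) * (∑ g, C g a a * y a g)
        + (∑ h, C h a a * u a h) * (∑ g, y a g) = 0 := by
      have h0 : ∑ g, (C g a a * (∑ h, u a h) + ∑ h, C h a a * u a h) * y a g = 0 := by
        have e : ∀ g, (C g a a * (∑ h, u a h) + ∑ h, C h a a * u a h) * y a g
            = (2 * lamPlus fun g' => C g' a a) * (u a g * y a g) := by
          intro g
          rw [heig2 a g]
          ring
        simp_rw [e]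
        rw [← Finset.mul_sum, hu0, mul_zero]
      have h1 : ∑ g, (C g a a * (∑ h, u a h) + ∑ h, C h a a * u a h) * y a g
          = (∑ h, u a h) * (∑ g, C g a a * y a g)
            + (∑ h, C h a a * u a h) * (∑ g, y a g) := by
        rw [Finset.mul_sum, Finset.mul_sum, ← Finset.sum_add_distrib]
        exact Finset.sum_congr rfl fun g _ => by ring
      rw [← h1, h0]
    -- conclude nonpositivity
    have h2 : (∑ h, u a h) * ((∑ g, C g a a * y a g) * (∑ g, y a g))
        = -((∑ h, C h a a * u a h) * ((∑ g, y a g) * (∑ g, y a g))) := by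
      linear_combination (∑ g, y a g) * hkey
    nlinarith [h2, hA, mul_nonneg hB (mul_self_nonneg (∑ g, y a g))]
  -- ## diagonal inverses and square roots
  set Dinv : Matrix (Fin d) (Fin d) ℝ := Matrix.diagonal (fun l => (μ l)⁻¹) with hDinvdef
  have hDDinv : Matrix.diagonal μ * Dinv = 1 := by
    rw [hDinvdef, Matrix.diagonal_mul_diagonal]
    have e : ∀ l, μ l * (μ l)⁻¹ = 1 := fun l => mul_inv_cancel₀ (hμpos l).ne'
    simp only [e, Matrix.diagonal_one]
  have hDinvD : Dinv * Matrix.diagonal μ = 1 := by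
    rw [hDinvdef, Matrix.diagonal_mul_diagonal]
    have e : ∀ l, (μ l)⁻¹ * μ l = 1 := fun l => inv_mul_cancel₀ (hμpos l).ne'
    simp only [e, Matrix.diagonal_one]
  set F : Matrix (Fin d) (Fin d) ℝ := Matrix.diagonal (fun l => (Real.sqrt (μ l))⁻¹) with hFdef
  have hsqμ : ∀ l, Real.sqrt (μ l) ≠ 0 := fun l => (Real.sqrt_pos.mpr (hμpos l)).ne'
  have hFF : F * F = Dinv := by
    rw [hFdef, hDinvdef, Matrix.diagonal_mul_diagonal]
    have e : ∀ l, (Real.sqrt (μ l))⁻¹ * (Real.sqrt (μ l))⁻¹ = (μ l)⁻¹ := fun l => by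
      rw [← mul_inv, Real.mul_self_sqrt (hμpos l).le]
    simp only [e]
  have hFE : F * Matrix.diagonal (fun l => Real.sqrt (μ l)) = 1 := by
    rw [hFdef, Matrix.diagonal_mul_diagonal]
    have e : ∀ l, (Real.sqrt (μ l))⁻¹ * Real.sqrt (μ l) = 1 := fun l =>
      inv_mul_cancel₀ (hsqμ l)
    simp only [e, Matrix.diagonal_one]
  -- LSᵀ * Ptil = D * LSᵀ
  have hLtP : LSᵀ * Ptil = Matrix.diagonal μ * LSᵀ := by
    have h := congrArg Matrix.transpose key2
    rw [Matrix.transpose_mul, Matrix.transpose_mul, hPsym, Matrix.diagonal_transpose] at h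
    exact h
  -- ## the residual R is zero
  set R : Matrix (Fin m × Fin n) (Fin d) ℝ := U - LS * (Dinv * (LSᵀ * U)) with hRdef
  have hLR : LSᵀ * R = 0 := by
    rw [hRdef, Matrix.mul_sub, ← Matrix.mul_assoc, key1, ← Matrix.mul_assoc,
      hDDinv, Matrix.one_mul, sub_self]
  have hPR : Ptil * R = R * Matrix.diagonal s := by
    have e1 : Ptil * (LS * (Dinv * (LSᵀ * U))) = LS * (LSᵀ * U) := by
      rw [← Matrix.mul_assoc, key2, Matrix.mul_assoc, ← Matrix.mul_assoc (Matrix.diagonal μ),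
        hDDinv, Matrix.one_mul]
    have e2 : LS * (Dinv * (LSᵀ * U)) * Matrix.diagonal s = LS * (LSᵀ * U) := by
      rw [Matrix.mul_assoc, Matrix.mul_assoc, Matrix.mul_assoc, ← hUeig,
        ← Matrix.mul_assoc LSᵀ, hLtP, Matrix.mul_assoc, ← Matrix.mul_assoc Dinv,
        hDinvD, Matrix.one_mul]
    rw [hRdef, Matrix.mul_sub, Matrix.sub_mul, hUeig, e1, e2]
  have hR0 : R = 0 := by
    ext p j
    have hcol : ∀ l, ∑ q, LS q l * R q j = 0 := by
      intro l
      have h := congrFun (congrFun hLR l) j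
      rw [Matrix.mul_apply] at h
      simp only [Matrix.transpose_apply, Matrix.zero_apply] at h
      exact h
    have hPcol : ∀ p', ∑ q, Ptil p' q * R q j = R p' j * s j := by
      intro p'
      have h := congrFun (congrFun hPR p') j
      rw [Matrix.mul_apply, Matrix.mul_diagonal] at h
      exact h
    have hneg := neg (fun q => R q j) hcol
    have e : ∑ p', R p' j * ∑ q, Ptil p' q * R q j = s j * ∑ p', R p' j * R p' j := by
      rw [Finset.mul_sum]
      refine Finset.sum_congr rfl fun p' _ => ?_
      rw [hPcol p']
      ring
    rw [e] at hneg
    have hnn : 0 ≤ ∑ p', R p' j * R p' j :=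
      Finset.sum_nonneg fun _ _ => mul_self_nonneg _
    have hz : ∑ p', R p' j * R p' j = 0 := by nlinarith [hs_pos j]
    have hterm := (Finset.sum_eq_zero_iff_of_nonneg
      (fun p' _ => mul_self_nonneg (R p' j))).mp hz p (Finset.mem_univ p)
    simpa using mul_self_eq_zero.mp hterm
  have hU : U = LS * (Dinv * (LSᵀ * U)) := by
    have h := hR0
    rw [hRdef] at h
    exact sub_eq_zero.mp h
  -- ## the orthogonal matrix M
  set M : Matrix (Fin d) (Fin d) ℝ := F * (LSᵀ * U) with hMdef
  have hMt : Mᵀ = (Uᵀ * LS) * F := by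
    rw [hMdef, Matrix.transpose_mul, Matrix.transpose_mul, Matrix.transpose_transpose,
      hFdef, Matrix.diagonal_transpose]
  have hMtM : Mᵀ * M = 1 := by
    rw [hMt, hMdef]
    calc Uᵀ * LS * F * (F * (LSᵀ * U))
        = Uᵀ * (LS * ((F * F) * (LSᵀ * U))) := by simp only [Matrix.mul_assoc]
      _ = Uᵀ * U := by rw [hFF, ← hU]
      _ = 1 := hUorth
  have hMMt : M * Mᵀ = 1 := mul_eq_one_comm.mp hMtM
  -- M intertwines the diagonal matrices
  have hcommF : Matrix.diagonal μ * F = F * Matrix.diagonal μ := by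
    rw [hFdef, Matrix.diagonal_mul_diagonal, Matrix.diagonal_mul_diagonal]
    exact congrArg Matrix.diagonal (funext fun l => mul_comm _ _)
  have hDM : Matrix.diagonal μ * M = M * Matrix.diagonal s := by
    rw [hMdef]
    calc Matrix.diagonal μ * (F * (LSᵀ * U))
        = F * (Matrix.diagonal μ * LSᵀ * U) := by
          rw [← Matrix.mul_assoc, hcommF, Matrix.mul_assoc, ← Matrix.mul_assoc (Matrix.diagonal μ)]
      _ = F * (LSᵀ * Ptil * U) := by rw [hLtP]
      _ = F * (LSᵀ * (U * Matrix.diagonal s)) := by rw [Matrix.mul_assoc, hUeig]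
      _ = F * (LSᵀ * U) * Matrix.diagonal s := by simp only [Matrix.mul_assoc]
  have hEM : Matrix.diagonal (fun l => Real.sqrt (μ l)) * M
      = M * Matrix.diagonal (fun j => Real.sqrt (s j)) := by
    ext l j
    have h := congrFun (congrFun hDM l) j
    rw [Matrix.diagonal_mul, Matrix.mul_diagonal] at h
    rw [Matrix.diagonal_mul, Matrix.mul_diagonal]
    by_cases hz : M l j = 0
    · rw [hz, mul_zero, zero_mul]
    · have hμs : μ l = s j := by
        have h' : μ l * M l j = s j * M l j := by rw [h]; ring
        exact mul_right_cancel₀ hz h'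
      rw [hμs, mul_comm]
  -- ## Z = LS * M
  have hZM : Z = LS * M := by
    rw [hZ, hU]
    calc LS * (Dinv * (LSᵀ * U)) * Matrix.diagonal (fun j => Real.sqrt (s j))
        = LS * F * ((F * (LSᵀ * U)) * Matrix.diagonal (fun j => Real.sqrt (s j))) := by
          rw [← hFF]; simp only [Matrix.mul_assoc]
      _ = LS * F * (Matrix.diagonal (fun l => Real.sqrt (μ l)) * (F * (LSᵀ * U))) := by
          rw [← hMdef, ← hEM]
      _ = LS * (F * Matrix.diagonal (fun l => Real.sqrt (μ l))) * (F * (LSᵀ * U)) := by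
          simp only [Matrix.mul_assoc]
      _ = LS * M := by
          rw [hMdef, hFdef]
          rw [Matrix.diagonal_mul_diagonal]
          rw [show (Matrix.diagonal fun l => (Real.sqrt (μ l))⁻¹ * Real.sqrt (μ l)) = (1 : Matrix (Fin d) (Fin d) ℝ) from
            (congrArg Matrix.diagonal (funext fun l => inv_mul_cancel₀ (hsqμ l))).trans Matrix.diagonal_one]
          rw [Matrix.mul_one, ← hFdef]
  -- ## conclusion
  constructor
  · rw [hZM, Matrix.transpose_mul, Matrix.mul_assoc, ← Matrix.mul_assoc M, hMMt,
      Matrix.one_mul]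
  · exact ⟨M, hMtM, hMMt, by rw [hZM, Matrix.mul_assoc, hMMt, Matrix.mul_one]⟩




end
end

section
/- Let {C^(g)}_{g=1}^m and {C'^(g)}_{g=1}^m be two families of d×d diagonal matrices with nonnegative entries, each satisfying min_{i∈[d]} max_{g∈[m]} (·)_{ii} > 0, and let {S^(g)} and {S'^(g)} be their associated scaling matrices. If S^(g) = S'^(g) for all g ∈ [m], then C^(g) = C'^(g) for all g ∈ [m]; that is, the map from the weighting matrices {C^(g)} to the scaling matrices {S^(g)} is one-to-one. -/
open Matrix BigOperators

noncomputable section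

/-- If `w` is an eigenvector of `H(v)` with eigenvalue `lam`, then
`v` is determined by `lam` and `w`. -/
lemma key_eig {m : ℕ} (v w : Fin m → ℝ) (lam : ℝ)
    (heig : (Hmat v).mulVec w = lam • w) (g : Fin m) :
    v g * (∑ j, w j) ^ 2 = 2 * lam * w g * (∑ j, w j) - lam * (∑ j, w j ^ 2) := by
  have hei : ∀ g', v g' * (∑ j, w j) + (∑ j, v j * w j) = 2 * lam * w g' := by
    intro g'
    have h := congrFun heig g'
    simp only [Matrix.mulVec, dotProduct, Hmat, Matrix.of_apply,
      Pi.smul_apply, smul_eq_mul] at h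
    have h1 : (2:ℝ) * ∑ j, (v g' + v j) / 2 * w j
        = v g' * (∑ j, w j) + ∑ j, v j * w j := by
      calc (2:ℝ) * ∑ j, (v g' + v j) / 2 * w j
          = ∑ j, (v g' * w j + v j * w j) := by
            rw [Finset.mul_sum]
            exact Finset.sum_congr rfl fun j _ => by ring
        _ = v g' * (∑ j, w j) + ∑ j, v j * w j := by
            rw [Finset.sum_add_distrib, Finset.mul_sum]
    linarith [h1, h]
  have hPS : (∑ j, v j * w j) * (∑ j, w j) = lam * ∑ j, w j ^ 2 := by
    have h2 : ∑ g', (v g' * (∑ j, w j) + (∑ j, v j * w j)) * w g'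
        = ∑ g', (2 * lam * w g') * w g' :=
      Finset.sum_congr rfl fun g' _ => by rw [hei g']
    have hL : ∑ g', (v g' * (∑ j, w j) + (∑ j, v j * w j)) * w g'
        = 2 * ((∑ j, v j * w j) * (∑ j, w j)) := by
      calc ∑ g', (v g' * (∑ j, w j) + (∑ j, v j * w j)) * w g'
          = ∑ g', (v g' * w g' * (∑ j, w j) + (∑ j, v j * w j) * w g') :=
            Finset.sum_congr rfl fun g' _ => by ring
        _ = (∑ g', v g' * w g') * (∑ j, w j) + (∑ j, v j * w j) * (∑ g', w g') := by
            rw [Finset.sum_add_distrib, ← Finset.sum_mul, ← Finset.mul_sum]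
        _ = 2 * ((∑ j, v j * w j) * (∑ j, w j)) := by ring
    have hR : ∑ g', (2 * lam * w g') * w g' = 2 * lam * ∑ j, w j ^ 2 := by
      rw [Finset.mul_sum]
      exact Finset.sum_congr rfl fun j _ => by ring
    rw [hL, hR] at h2
    linarith
  have h3 : (v g * (∑ j, w j) + (∑ j, v j * w j)) * (∑ j, w j)
      = (2 * lam * w g) * (∑ j, w j) := by rw [hei g]
  nlinarith [h3, hPS]

lemma lamPlus_nonneg {m : ℕ} (v : Fin m → ℝ) : 0 ≤ lamPlus v := by
  have h1 : 0 ≤ l1 v := Finset.sum_nonneg fun j _ => abs_nonneg _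
  have h2 : 0 ≤ l2 v := Real.sqrt_nonneg _
  have h3 : 0 ≤ Real.sqrt m := Real.sqrt_nonneg _
  unfold lamPlus
  positivity

lemma lamPlus_pos {m : ℕ} (v : Fin m → ℝ) (g : Fin m) (hg : 0 < v g) :
    0 < lamPlus v := by
  have h1 : |v g| ≤ l1 v :=
    Finset.single_le_sum (fun j _ => abs_nonneg (v j)) (Finset.mem_univ g)
  have h2 : 0 < l1 v := lt_of_lt_of_le (by rwa [abs_of_pos hg]) h1
  have h3 : 0 ≤ Real.sqrt m * l2 v := mul_nonneg (Real.sqrt_nonneg _) (Real.sqrt_nonneg _)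
  unfold lamPlus
  linarith

/-- Let `{C^(g)}` and `{C'^(g)}` be two families of `d×d` nonnegative
diagonal matrices, each satisfying `min_i max_g (·)_{ii} > 0`, and let `{S^(g)}`, `{S'^(g)}`
be their scaling matrices, `S^(g) = diag(α(v₁)_g, …, α(v_d)_g)` with
`v_i = (C^(1)_{ii}, …, C^(m)_{ii})` and `α(v) = √(λ₊(v)) • u(v)` for `u(v)` the unique
positive unit eigenvector of `H(v)` for `λ₊(v)`.  If `S^(g) = S'^(g)` for all `g`, then
`C^(g) = C'^(g)` for all `g`: the map from weighting matrices to scaling matrices is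
one-to-one. -/
theorem statement7 (d m : ℕ)
    (C C' : Fin m → Matrix (Fin d) (Fin d) ℝ)
    (hCdiag : ∀ g, (C g).IsDiag) (hCnn : ∀ g i, 0 ≤ C g i i)
    (hCpos : ∀ i, ∃ g, 0 < C g i i)
    (hC'diag : ∀ g, (C' g).IsDiag) (hC'nn : ∀ g i, 0 ≤ C' g i i)
    (hC'pos : ∀ i, ∃ g, 0 < C' g i i)
    (u u' : Fin d → Fin m → ℝ)
    (hu_unit : ∀ i, l2 (u i) = 1) (hu_pos : ∀ i g, 0 < u i g)
    (hu_eig : ∀ i, (Hmat fun g => C g i i).mulVec (u i)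
      = lamPlus (fun g => C g i i) • u i)
    (hu'_unit : ∀ i, l2 (u' i) = 1) (hu'_pos : ∀ i g, 0 < u' i g)
    (hu'_eig : ∀ i, (Hmat fun g => C' g i i).mulVec (u' i)
      = lamPlus (fun g => C' g i i) • u' i)
    (hS : ∀ g : Fin m,
      Matrix.diagonal (fun i => Real.sqrt (lamPlus fun g' => C g' i i) * u i g)
        = Matrix.diagonal (fun i => Real.sqrt (lamPlus fun g' => C' g' i i) * u' i g)) :
    ∀ g, C g = C' g := by
  intro g
  ext i j
  by_cases hij : i = j
  · subst hij
    set v : Fin m → ℝ := fun g' => C g' i i with hvdef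
    set v' : Fin m → ℝ := fun g' => C' g' i i with hv'def
    -- the α-components agree
    have hα : ∀ g', Real.sqrt (lamPlus v) * u i g'
        = Real.sqrt (lamPlus v') * u' i g' := by
      intro g'
      have := congrFun (Matrix.diagonal_injective (hS g')) i
      exact this
    -- ∑ u² = 1 and ∑ u'² = 1
    have hQnnU : 0 ≤ ∑ g', u i g' ^ 2 := Finset.sum_nonneg fun _ _ => sq_nonneg _
    have hQ : ∑ g', u i g' ^ 2 = 1 := by
      have h := hu_unit i
      unfold l2 at h
      have := Real.sq_sqrt hQnnU
      rw [h] at this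
      linarith
    have hQ'nn : 0 ≤ ∑ g', u' i g' ^ 2 := Finset.sum_nonneg fun _ _ => sq_nonneg _
    have hQ' : ∑ g', u' i g' ^ 2 = 1 := by
      have h := hu'_unit i
      unfold l2 at h
      have := Real.sq_sqrt hQ'nn
      rw [h] at this
      linarith
    -- positivity of eigenvalues
    obtain ⟨g0, hg0⟩ := hCpos i
    have hlampos : 0 < lamPlus v := lamPlus_pos v g0 hg0
    obtain ⟨g0', hg0'⟩ := hC'pos i
    have hlam2pos : 0 < lamPlus v' := lamPlus_pos v' g0' hg0'
    -- equality of eigenvalues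
    have hlameq : lamPlus v = lamPlus v' := by
      have h1 : ∑ g', (Real.sqrt (lamPlus v) * u i g') ^ 2 = lamPlus v := by
        have : ∑ g', (Real.sqrt (lamPlus v) * u i g') ^ 2
            = Real.sqrt (lamPlus v) ^ 2 * ∑ g', u i g' ^ 2 := by
          rw [Finset.mul_sum]
          exact Finset.sum_congr rfl fun j _ => by ring
        rw [this, hQ, Real.sq_sqrt hlampos.le, mul_one]
      have h2 : ∑ g', (Real.sqrt (lamPlus v') * u' i g') ^ 2 = lamPlus v' := by
        have : ∑ g', (Real.sqrt (lamPlus v') * u' i g') ^ 2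
            = Real.sqrt (lamPlus v') ^ 2 * ∑ g', u' i g' ^ 2 := by
          rw [Finset.mul_sum]
          exact Finset.sum_congr rfl fun j _ => by ring
        rw [this, hQ', Real.sq_sqrt hlam2pos.le, mul_one]
      rw [← h1, ← h2]
      exact Finset.sum_congr rfl fun g' _ => by rw [hα g']
    -- equality of eigenvectors
    have hsqrtpos : 0 < Real.sqrt (lamPlus v) := Real.sqrt_pos.mpr hlampos
    have hueq : u i = u' i := by
      funext g'
      have h := hα g'
      rw [← hlameq] at h
      exact mul_left_cancel₀ (ne_of_gt hsqrtpos) h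
    -- recover v from (lamPlus, u)
    have hkey := key_eig v (u i) (lamPlus v) (hu_eig i) g
    have hkey' := key_eig v' (u' i) (lamPlus v') (hu'_eig i) g
    rw [← hueq, ← hlameq] at hkey'
    have hSpos : 0 < ∑ j, u i j := by
      have : Nonempty (Fin m) := ⟨g⟩
      exact Finset.sum_pos (fun j _ => hu_pos i j) Finset.univ_nonempty
    have : v g * (∑ j, u i j) ^ 2 = v' g * (∑ j, u i j) ^ 2 := by
      rw [hkey, hkey']
    exact mul_right_cancel₀ (pow_ne_zero 2 (ne_of_gt hSpos)) this
  · rw [hCdiag g hij, hC'diag g hij]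

end
end
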